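/- Let P be a normal logic program and q an atom. Define P(q⁺) = simp(P,{q},∅) and P(q⁻) = simp(P,∅,{q}). Then the number of stable models of P is at most the number of stable models of P(q⁺) plus the number of stable models of P(q⁻). -/
import Mathlib

/-- A normal program clause: head ← pos, not(neg). -/
structure Clause where
  head : ℕ
  pos : Finset ℕ
  neg : Finset ℕ
deriving DecidableEq

/-- N is closed under (is a model of) the Gelfond–Lifschitz reduct of P with respect to M. -/
def ReductClosed (P : Finset Clause) (M N : Set ℕ) : Prop :=
  ∀ c ∈ P, (∀ a ∈ c.neg, a ∉ M) → (↑c.pos : Set ℕ) ⊆ N → c.head ∈ N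

/-- M is a stable model of P: M is the least model of the reduct P^M. -/
def IsStableModel (P : Finset Clause) (M : Set ℕ) : Prop :=
  ReductClosed P M M ∧ ∀ N : Set ℕ, ReductClosed P M N → M ⊆ N

/-- The simplification simp(P,T,F) of a program P with respect to disjoint sets
of atoms T (true) and F (false). -/
def simpP (P : Finset Clause) (T F : Finset ℕ) : Finset Clause :=
  (P.filter (fun c => c.head ∉ T ∪ F ∧ c.pos ∩ F = ∅ ∧ c.neg ∩ T = ∅)).image
    (fun c => ⟨c.head, c.pos \ T, c.neg \ F⟩)

lemma stable_finite (P : Finset Clause) : {M : Set ℕ | IsStableModel P M}.Finite := by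
  apply Set.Finite.subset ((P.image Clause.head : Finset ℕ).finite_toSet.finite_subsets)
  intro M hM
  exact hM.2 _ (fun c hc _ _ => Finset.mem_coe.mpr (Finset.mem_image_of_mem _ hc))

lemma stable_plus {P : Finset Clause} {q : ℕ} {M : Set ℕ}
    (hM : IsStableModel P M) (hq : q ∈ M) :
    IsStableModel (simpP P {q} ∅) (M \ {q}) := by
  constructor
  · intro c' hc' hneg hpos
    simp only [simpP, Finset.mem_image, Finset.mem_filter] at hc'
    obtain ⟨c, ⟨hcP, h1, h2, h3⟩, rfl⟩ := hc'
    simp only [Finset.union_empty, Finset.mem_singleton] at h1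
    have hqneg : q ∉ c.neg := by
      intro h
      exact (Finset.eq_empty_iff_forall_notMem.mp h3 q) (Finset.mem_inter.mpr ⟨h, Finset.mem_singleton_self q⟩)
    have hhead : c.head ∈ M := by
      apply hM.1 c hcP
      · intro a ha haM
        exact hneg a (by simpa using ha) ⟨haM, by rintro rfl; exact hqneg ha⟩
      · intro x hx
        rcases eq_or_ne x q with rfl | hxq
        · exact hq
        · exact (hpos (by simp only [Finset.coe_sdiff, Set.mem_diff, Finset.mem_coe,
            Finset.coe_singleton, Set.mem_singleton_iff]; exact ⟨hx, hxq⟩)).1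
    exact ⟨hhead, h1⟩
  · intro N hN
    have hMN : M ⊆ N ∪ {q} := by
      apply hM.2
      intro c hcP hneg hpos
      rcases eq_or_ne c.head q with h | h
      · exact Or.inr h
      · have hqneg : q ∉ c.neg := fun hqn => hneg q hqn hq
        have hc' : (⟨c.head, c.pos \ {q}, c.neg \ ∅⟩ : Clause) ∈ simpP P {q} ∅ :=
          Finset.mem_image_of_mem _ (Finset.mem_filter.mpr ⟨hcP, by simpa using h, by simp,
            by simp [Finset.eq_empty_iff_forall_notMem, hqneg]⟩)
        have : c.head ∈ N := by
          apply hN ⟨c.head, c.pos \ {q}, c.neg \ ∅⟩ hc'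
          · intro a ha haM
            exact absurd haM.1 (hneg a (by simpa using ha))
          · intro x hx
            simp only [Finset.coe_sdiff, Set.mem_diff, Finset.mem_coe, Finset.coe_singleton,
              Set.mem_singleton_iff] at hx
            rcases hpos (Finset.mem_coe.mpr hx.1) with hxN | hxq
            · exact hxN
            · exact absurd hxq hx.2
        exact Or.inl this
    intro x hx
    rcases hMN hx.1 with hxN | hxq
    · exact hxN
    · exact absurd hxq hx.2

lemma stable_minus {P : Finset Clause} {q : ℕ} {M : Set ℕ}
    (hM : IsStableModel P M) (hq : q ∉ M) :
    IsStableModel (simpP P ∅ {q}) M := by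
  constructor
  · intro c' hc' hneg hpos
    simp only [simpP, Finset.mem_image, Finset.mem_filter] at hc'
    obtain ⟨c, ⟨hcP, h1, h2, h3⟩, rfl⟩ := hc'
    apply hM.1 c hcP
    · intro a ha haM
      rcases eq_or_ne a q with rfl | haq
      · exact hq haM
      · exact hneg a (Finset.mem_sdiff.mpr ⟨ha, by simpa using haq⟩) haM
    · intro x hx
      exact hpos (by simpa using hx)
  · intro N hN
    have key : ReductClosed P M (N ∩ M) := by
      intro c hcP hneg hpos
      have hheadM : c.head ∈ M := hM.1 c hcP hneg (fun x hx => (hpos hx).2)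
      have hheadq : c.head ≠ q := fun h => hq (h ▸ hheadM)
      have hqpos : q ∉ c.pos := fun h => hq (hpos (Finset.mem_coe.mpr h)).2
      have hc' : (⟨c.head, c.pos \ ∅, c.neg \ {q}⟩ : Clause) ∈ simpP P ∅ {q} :=
        Finset.mem_image_of_mem _ (Finset.mem_filter.mpr ⟨hcP, by simpa using hheadq,
          by simp [Finset.eq_empty_iff_forall_notMem, hqpos], by simp⟩)
      refine ⟨hN ⟨c.head, c.pos \ ∅, c.neg \ {q}⟩ hc' ?_ ?_, hheadM⟩
      · intro a ha
        have ha' : a ∈ c.neg \ ({q} : Finset ℕ) := ha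
        exact hneg a (Finset.mem_sdiff.mp ha').1
      · intro x hx
        exact (hpos (by simpa using hx)).1
    exact fun x hx => (hM.2 _ key hx).1

/-- s(P) ≤ s(P(q⁺)) + s(P(q⁻)) where P(q⁺) = simp(P,{q},∅) and P(q⁻) = simp(P,∅,{q}). -/
theorem count_split_on_atom (P : Finset Clause) (q : ℕ) :
    {M : Set ℕ | IsStableModel P M}.ncard ≤
      {M : Set ℕ | IsStableModel (simpP P {q} ∅) M}.ncard +
      {M : Set ℕ | IsStableModel (simpP P ∅ {q}) M}.ncard := by
  set A : Set (Set ℕ) := {M | IsStableModel P M ∧ q ∈ M}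
  set B : Set (Set ℕ) := {M | IsStableModel P M ∧ q ∉ M}
  have hsplit : {M : Set ℕ | IsStableModel P M} = A ∪ B := by
    ext M; simp only [Set.mem_setOf_eq, Set.mem_union, A, B, Set.mem_setOf_eq]
    tauto
  have hA : A.ncard ≤ {M : Set ℕ | IsStableModel (simpP P {q} ∅) M}.ncard := by
    have himg : (fun M : Set ℕ => M \ {q}) '' A ⊆ {M | IsStableModel (simpP P {q} ∅) M} := by
      rintro _ ⟨M, ⟨hM, hq⟩, rfl⟩
      exact stable_plus hM hq
    have hinj : Set.InjOn (fun M : Set ℕ => M \ {q}) A := by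
      intro M₁ h₁ M₂ h₂ h
      have h' : M₁ \ {q} = M₂ \ {q} := h
      have : M₁ \ {q} ∪ {q} = M₂ \ {q} ∪ {q} := by rw [h']
      rwa [Set.diff_union_of_subset (Set.singleton_subset_iff.mpr h₁.2),
        Set.diff_union_of_subset (Set.singleton_subset_iff.mpr h₂.2)] at this
    calc A.ncard = ((fun M : Set ℕ => M \ {q}) '' A).ncard := (Set.ncard_image_of_injOn hinj).symm
      _ ≤ _ := Set.ncard_le_ncard himg (stable_finite _)
  have hB : B.ncard ≤ {M : Set ℕ | IsStableModel (simpP P ∅ {q}) M}.ncard := by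
    apply Set.ncard_le_ncard _ (stable_finite _)
    rintro M ⟨hM, hq⟩
    exact stable_minus hM hq
  calc {M : Set ℕ | IsStableModel P M}.ncard = (A ∪ B).ncard := by rw [hsplit]
    _ ≤ A.ncard + B.ncard := Set.ncard_union_le A B
    _ ≤ _ := Nat.add_le_add hA hB
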